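/- arXiv:1707.06259 — 2 statements merged into one kernel-verified Lean document; each statement's English description precedes it below -/
import Mathlib

section
/- Let d ≥ 2 and n ≥ 2d, and let g be a real-valued function on 𝔐^{(n)}_d that is invariant under permuting the entries of a tuple. Then there exist a constant C > 0 and δ ∈ (0,1) such that for all q ∈ (0, δ): | Σ_{k=1}^{d} Σ_{(μ^{(1)},…,μ^{(k)}) ∈ 𝔐^{(n)}_{d,k}} g(μ^{(1)},…,μ^{(k)}) · W_q(μ^{(1)},…,μ^{(k)}) − q^d Σ_{μ^{(1)}: ℓ*(μ^{(1)}) = d} g(μ^{(1)}) − q^{d+1} Σ_{(μ^{(1)},μ^{(2)}): ℓ*(μ^{(1)}) = d−1, ℓ*(μ^{(2)}) = 1} g(μ^{(1)},μ^{(2)}) | ≤ C · q^{d+2}, where the latter two sums run over single partitions and ordered pairs of partitions of n with the indicated colengths. -/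
open scoped Classical

/-- The colength `ℓ*(μ) = |μ| - ℓ(μ)` of a partition `μ` of `n`. -/
def colen {n : ℕ} (P : Nat.Partition n) : ℕ := n - Multiset.card P.parts

/-- `𝔐^{(n)}_{d,k}`: the set of `k`-tuples `(μ⁽¹⁾, …, μ⁽ᵏ⁾)` of partitions of `n` with
`ℓ*(μ⁽ʲ⁾) ≥ 1` for all `j` and `Σⱼ ℓ*(μ⁽ʲ⁾) = d`. -/
noncomputable def Mset (n d k : ℕ) : Finset (Fin k → Nat.Partition n) :=
  Finset.univ.filter (fun T => (∀ j, 1 ≤ colen (T j)) ∧ ∑ j, colen (T j) = d)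

/-- The weight `W_q(μ⁽¹⁾, …, μ⁽ᵏ⁾) = ∏ⱼ q^{Tⱼ}/(1 - q^{Tⱼ})`, with
`Tⱼ = ℓ*(μ⁽¹⁾) + … + ℓ*(μ⁽ʲ⁾)`. -/
noncomputable def Wq (q : ℝ) {n k : ℕ} (T : Fin k → Nat.Partition n) : ℝ :=
  ∏ j : Fin k,
    (q ^ (∑ i ∈ Finset.univ.filter (fun i => i ≤ j), colen (T i)) /
      (1 - q ^ (∑ i ∈ Finset.univ.filter (fun i => i ≤ j), colen (T i))))

/-! Write `T_j` for the partial colength sums of a tuple in `𝔐^{(n)}_{d,k}`. Each factor of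
`W_q = ∏ⱼ q^{T_j}/(1 - q^{T_j})` is `q^{T_j} + O(q^{2 T_j})`, so for `q ≤ 1/2` the weight lies in
`[0, 2^k q^{Σⱼ T_j}]`; since `T_k = d` and every `T_j ≥ 1`, `Σⱼ T_j ≥ d + k - 1`. Only `k = 1`
(exponent `d`) and `k = 2` with `ℓ*(μ⁽¹⁾) = 1` (exponent `d + 1`) survive modulo `q^{d+2}`, and for
those the expansion of the factors leaves an error `O(q^{d+2})` because `d ≥ 2`. The symmetry of `g`
moves the colength-one partition of a surviving pair into second position. -/

open Finset

def partialColen {n k : ℕ} (T : Fin k → Nat.Partition n) (j : Fin k) : ℕ :=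
  ∑ i ∈ univ.filter (fun i => i ≤ j), colen (T i)

/-- The part of `Wq q T`, for `T ∈ Mset n d k`, that is not `O(q ^ (d + 2))` as `q → 0`. -/
def leadingWq (d : ℕ) (q : ℝ) {n : ℕ} : ∀ {k : ℕ}, (Fin k → Nat.Partition n) → ℝ
  | 1, _ => q ^ d
  | 2, T => if colen (T 0) = 1 then q ^ (d + 1) else 0
  | _, _ => 0

section Partitions

variable {n d k : ℕ}

lemma mem_Mset_iff {T : Fin k → Nat.Partition n} :
    T ∈ Mset n d k ↔ (∀ j, 1 ≤ colen (T j)) ∧ ∑ j, colen (T j) = d := by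
  simp [Mset]

lemma length_le_of_mem_Mset {T : Fin k → Nat.Partition n} (hT : T ∈ Mset n d k) : k ≤ d := by
  obtain ⟨hpos, hsum⟩ := mem_Mset_iff.mp hT
  simpa [← hsum] using card_nsmul_le_sum univ (fun j => colen (T j)) 1 fun j _ => hpos j

lemma Wq_eq_prod (q : ℝ) (T : Fin k → Nat.Partition n) :
    Wq q T = ∏ j, q ^ partialColen T j / (1 - q ^ partialColen T j) := rfl

lemma colen_le_partialColen (T : Fin k → Nat.Partition n) (j : Fin k) :
    colen (T j) ≤ partialColen T j :=
  single_le_sum (f := fun i => colen (T i)) (fun _ _ => Nat.zero_le _) (by simp)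

lemma partialColen_last {m : ℕ} (T : Fin (m + 1) → Nat.Partition n) :
    partialColen T (Fin.last m) = ∑ j, colen (T j) := by
  simp [partialColen, Fin.le_last]

lemma partialColen_zero (T : Fin (k + 1) → Nat.Partition n) :
    partialColen T 0 = colen (T 0) := by
  simp [partialColen, filter_eq']

lemma sum_colen_add_le_sum_partialColen {T : Fin k → Nat.Partition n}
    (hT : ∀ j, 1 ≤ colen (T j)) : ∑ j, colen (T j) + (k - 1) ≤ ∑ j, partialColen T j := by
  cases k with
  | zero => simp
  | succ m =>
    have hinit : m ≤ ∑ i : Fin m, partialColen T i.castSucc := by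
      simpa using card_nsmul_le_sum univ (fun i : Fin m => partialColen T i.castSucc) 1
        fun i _ => (hT _).trans (colen_le_partialColen T _)
    rw [Fin.sum_univ_castSucc (f := partialColen T), partialColen_last]
    omega

lemma sum_filter_colen_eq_sum_Mset_one (hd : 1 ≤ d) (f : (Fin 1 → Nat.Partition n) → ℝ) :
    ∑ P ∈ univ.filter (fun P : Nat.Partition n => colen P = d), f ![P] =
      ∑ T ∈ Mset n d 1, f T := by
  refine sum_equiv (Equiv.funUnique (Fin 1) _).symm (fun P => ?_) (fun P _ => ?_)
  · simp [mem_Mset_iff]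
    omega
  · congr 1
    ext i
    simp [Fin.fin_one_eq_zero i]

lemma sum_filter_colen_pair_eq_sum_Mset_two (hd : 2 ≤ d) (f : (Fin 2 → Nat.Partition n) → ℝ) :
    ∑ P ∈ univ.filter (fun P : Nat.Partition n × Nat.Partition n =>
        colen P.1 = d - 1 ∧ colen P.2 = 1), f ![P.2, P.1] =
      ∑ T ∈ (Mset n d 2).filter (fun T => colen (T 0) = 1), f T := by
  refine sum_equiv ((Equiv.prodComm _ _).trans (finTwoArrowEquiv _).symm) (fun P => ?_)
    (fun P _ => by simp)
  simp [mem_Mset_iff, Fin.forall_fin_two]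
  omega

end Partitions

section Weights

variable {q : ℝ}

lemma pow_div_one_sub_pow_nonneg (hq0 : 0 ≤ q) (hq1 : q ≤ 1) (m : ℕ) :
    0 ≤ q ^ m / (1 - q ^ m) :=
  div_nonneg (pow_nonneg hq0 m) (sub_nonneg.2 (pow_le_one₀ hq0 hq1))

lemma pow_div_one_sub_pow_le (hq0 : 0 ≤ q) (hq : q ≤ 1 / 2) {m : ℕ} (hm : m ≠ 0) :
    q ^ m / (1 - q ^ m) ≤ 2 * q ^ m := by
  have hqm : q ^ m ≤ q := pow_le_of_le_one hq0 (by linarith) hm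
  rw [div_le_iff₀ (by linarith)]
  nlinarith [pow_nonneg hq0 m]

lemma pow_div_one_sub_pow_sub_pow_mem_Icc (hq0 : 0 ≤ q) (hq : q ≤ 1 / 2) {m : ℕ} (hm : m ≠ 0) :
    q ^ m / (1 - q ^ m) - q ^ m ∈ Set.Icc 0 (2 * q ^ (2 * m)) := by
  have hqm : q ^ m ≤ q := pow_le_of_le_one hq0 (by linarith) hm
  have hsub : q ^ m / (1 - q ^ m) - q ^ m = q ^ m * (q ^ m / (1 - q ^ m)) := by
    field_simp [show 1 - q ^ m ≠ 0 by linarith]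
    ring
  rw [hsub, two_mul m, pow_add, mul_left_comm]
  exact ⟨mul_nonneg (pow_nonneg hq0 m) (pow_div_one_sub_pow_nonneg hq0 (by linarith) m),
    mul_le_mul_of_nonneg_left (pow_div_one_sub_pow_le hq0 hq hm) (pow_nonneg hq0 m)⟩

lemma abs_pow_div_one_sub_mul_sub_le (hq0 : 0 ≤ q) (hq : q ≤ 1 / 2) {d : ℕ} (hd : d ≠ 0) :
    |q ^ 1 / (1 - q ^ 1) * (q ^ d / (1 - q ^ d)) - q ^ (d + 1)| ≤ 6 * q ^ (d + 2) := by
  obtain ⟨ha0, ha⟩ := pow_div_one_sub_pow_sub_pow_mem_Icc hq0 hq one_ne_zero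
  obtain ⟨hb0, hb⟩ := pow_div_one_sub_pow_sub_pow_mem_Icc hq0 hq hd
  have hb2 := pow_div_one_sub_pow_le hq0 hq hd
  have hq2d : q ^ (2 * d) ≤ q ^ (d + 1) := pow_le_pow_of_le_one hq0 (by linarith) (by omega)
  set a := q ^ 1 / (1 - q ^ 1)
  set b := q ^ d / (1 - q ^ d)
  rw [show a * b - q ^ (d + 1) = (a - q ^ 1) * b + q * (b - q ^ d) by ring,
    abs_of_nonneg (add_nonneg (mul_nonneg ha0 (by linarith [pow_nonneg hq0 d]))
      (mul_nonneg hq0 hb0))]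
  calc (a - q ^ 1) * b + q * (b - q ^ d)
      ≤ (2 * q ^ (2 * 1)) * (2 * q ^ d) + q * (2 * q ^ (d + 1)) := by
        gcongr <;> linarith
    _ = 6 * q ^ (d + 2) := by ring

variable {n d k : ℕ}

lemma Wq_nonneg (hq0 : 0 ≤ q) (hq1 : q ≤ 1) (T : Fin k → Nat.Partition n) : 0 ≤ Wq q T :=
  prod_nonneg fun _ _ => pow_div_one_sub_pow_nonneg hq0 hq1 _

lemma Wq_le_two_pow_mul (hq0 : 0 ≤ q) (hq : q ≤ 1 / 2) {T : Fin k → Nat.Partition n}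
    (hT : ∀ j, 1 ≤ colen (T j)) : Wq q T ≤ 2 ^ k * q ^ (∑ j, partialColen T j) := by
  have hpos : ∀ j, partialColen T j ≠ 0 := fun j =>
    (Nat.lt_of_lt_of_le (hT j) (colen_le_partialColen T j)).ne'
  calc Wq q T ≤ ∏ j, 2 * q ^ partialColen T j :=
        prod_le_prod (fun _ _ => pow_div_one_sub_pow_nonneg hq0 (by linarith) _)
          fun j _ => pow_div_one_sub_pow_le hq0 hq (hpos j)
    _ = 2 ^ k * q ^ (∑ j, partialColen T j) := by
        rw [prod_mul_distrib, prod_const, prod_pow_eq_pow_sum, card_univ, Fintype.card_fin]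

lemma abs_Wq_le_of_add_two_le (hq0 : 0 ≤ q) (hq : q ≤ 1 / 2) {T : Fin k → Nat.Partition n}
    (hT : T ∈ Mset n d k) (he : d + 2 ≤ ∑ j, partialColen T j) :
    |Wq q T| ≤ 2 ^ d * q ^ (d + 2) := by
  rw [abs_of_nonneg (Wq_nonneg hq0 (by linarith) T)]
  calc Wq q T ≤ 2 ^ k * q ^ (∑ j, partialColen T j) := Wq_le_two_pow_mul hq0 hq (mem_Mset_iff.mp hT).1
    _ ≤ 2 ^ d * q ^ (d + 2) :=
        mul_le_mul (pow_le_pow_right₀ one_le_two (length_le_of_mem_Mset hT))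
          (pow_le_pow_of_le_one hq0 (by linarith) he) (by positivity) (by positivity)

lemma Wq_one {T : Fin 1 → Nat.Partition n} (hT : T ∈ Mset n d 1) :
    Wq q T = q ^ d / (1 - q ^ d) := by
  rw [Wq_eq_prod, Fin.prod_univ_one, ← Fin.last_zero, partialColen_last,
    (mem_Mset_iff.mp hT).2]

lemma Wq_two {T : Fin 2 → Nat.Partition n} (hT : T ∈ Mset n d 2) :
    Wq q T = q ^ colen (T 0) / (1 - q ^ colen (T 0)) * (q ^ d / (1 - q ^ d)) := by
  rw [Wq_eq_prod, Fin.prod_univ_two, partialColen_zero, show (1 : Fin 2) = Fin.last 1 from rfl,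
    partialColen_last, (mem_Mset_iff.mp hT).2]

lemma abs_Wq_sub_leadingWq_le_two_pow_mul (hd : 2 ≤ d) (hq0 : 0 ≤ q) (hq : q ≤ 1 / 2)
    {T : Fin k → Nat.Partition n} (hT : T ∈ Mset n d k) :
    |Wq q T - leadingWq d q T| ≤ 2 ^ (d + 1) * q ^ (d + 2) := by
  obtain ⟨hpos, hsum⟩ := mem_Mset_iff.mp hT
  have hd0 : d ≠ 0 := by omega
  have hsplit := sum_colen_add_le_sum_partialColen hpos
  have htail : 2 ^ d * q ^ (d + 2) ≤ 2 ^ (d + 1) * q ^ (d + 2) := by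
    gcongr <;> norm_num
  rcases k with _ | _ | _ | m
  · simp at hsum
    omega
  · obtain ⟨hlow, hup⟩ := pow_div_one_sub_pow_sub_pow_mem_Icc hq0 hq hd0
    rw [Wq_one hT, leadingWq, abs_of_nonneg hlow]
    calc _ ≤ 2 * q ^ (2 * d) := hup
      _ ≤ 2 * q ^ (d + 2) := mul_le_mul_of_nonneg_left
          (pow_le_pow_of_le_one hq0 (by linarith) (by omega)) zero_le_two
      _ ≤ 2 ^ (d + 1) * q ^ (d + 2) := mul_le_mul_of_nonneg_right
          (le_self_pow₀ one_le_two (by omega)) (by positivity)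
  · by_cases h1 : colen (T 0) = 1
    · rw [Wq_two hT, h1, leadingWq, if_pos h1]
      exact (abs_pow_div_one_sub_mul_sub_le hq0 hq hd0).trans
        (mul_le_mul_of_nonneg_right
          ((by norm_num : (6 : ℝ) ≤ 2 ^ 3).trans (pow_le_pow_right₀ one_le_two (by omega)))
          (by positivity))
    · rw [leadingWq, if_neg h1, sub_zero]
      refine (abs_Wq_le_of_add_two_le hq0 hq hT ?_).trans htail
      have h0 := hpos 0
      rw [Fin.sum_univ_two, partialColen_zero, show (1 : Fin 2) = Fin.last 1 from rfl,
        partialColen_last, hsum]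
      omega
  · rw [show leadingWq d q T = 0 from rfl, sub_zero]
    exact (abs_Wq_le_of_add_two_le hq0 hq hT (by omega)).trans htail

end Weights

section Expansion

variable {n d k : ℕ} {q : ℝ}

lemma leadingWq_of_ne (hk1 : k ≠ 1) (hk2 : k ≠ 2) (T : Fin k → Nat.Partition n) :
    leadingWq d q T = 0 := by
  rcases k with _ | _ | _ | m <;> first | rfl | omega

lemma sum_mul_leadingWq (hd : 2 ≤ d) (g : ∀ k : ℕ, (Fin k → Nat.Partition n) → ℝ) :
    ∑ k ∈ Icc 1 d, ∑ T ∈ Mset n d k, g k T * leadingWq d q T =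
      q ^ d * ∑ P ∈ univ.filter (fun P : Nat.Partition n => colen P = d), g 1 ![P] +
      q ^ (d + 1) * ∑ P ∈ univ.filter (fun P : Nat.Partition n × Nat.Partition n =>
        colen P.1 = d - 1 ∧ colen P.2 = 1), g 2 ![P.2, P.1] := by
  rw [← sum_subset (s₁ := {1, 2}) (by intro k; simp; omega) (fun k _ hk => ?_),
    sum_pair (by norm_num : (1 : ℕ) ≠ 2)]
  · rw [mul_sum, mul_sum, sum_filter_colen_eq_sum_Mset_one (by omega) (fun T => q ^ d * g 1 T),
      sum_filter_colen_pair_eq_sum_Mset_two hd (fun T => q ^ (d + 1) * g 2 T), sum_filter]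
    congr 1 <;> refine sum_congr rfl fun T _ => ?_
    · simp [leadingWq, mul_comm]
    · split_ifs <;> simp [leadingWq, *, mul_comm]
  · simp only [mem_insert, mem_singleton, not_or] at hk
    exact sum_eq_zero fun T _ => by rw [leadingWq_of_ne hk.1 hk.2, mul_zero]

lemma abs_sum_mul_Wq_sub_leadingWq_le_two_pow_mul (hd : 2 ≤ d) (hq0 : 0 ≤ q) (hq : q ≤ 1 / 2)
    (s : Finset ℕ) (g : ∀ k : ℕ, (Fin k → Nat.Partition n) → ℝ) :
    |∑ k ∈ s, ∑ T ∈ Mset n d k, g k T * Wq q T -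
        ∑ k ∈ s, ∑ T ∈ Mset n d k, g k T * leadingWq d q T|
      ≤ 2 ^ (d + 1) * q ^ (d + 2) * ∑ k ∈ s, ∑ T ∈ Mset n d k, |g k T| := by
  simp_rw [← sum_sub_distrib, ← mul_sub, mul_sum]
  refine (abs_sum_le_sum_abs _ _).trans <| sum_le_sum fun k _ =>
    (abs_sum_le_sum_abs _ _).trans <| sum_le_sum fun T hT => ?_
  rw [abs_mul, mul_comm]
  exact mul_le_mul_of_nonneg_right (abs_Wq_sub_leadingWq_le_two_pow_mul hd hq0 hq hT) (abs_nonneg _)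

end Expansion

theorem zero_temp_stmt11_general (d n : ℕ) (hd : 2 ≤ d)
    (g : ∀ k : ℕ, (Fin k → Nat.Partition n) → ℝ)
    (hg : ∀ (k : ℕ) (σ : Equiv.Perm (Fin k)) (T : Fin k → Nat.Partition n),
      g k (T ∘ σ) = g k T) :
    ∃ C : ℝ, 0 < C ∧ ∃ δ ∈ Set.Ioo (0 : ℝ) 1, ∀ q ∈ Set.Ioo (0 : ℝ) δ,
      |(∑ k ∈ Finset.Icc 1 d, ∑ T ∈ Mset n d k, g k T * Wq q T)
        - q ^ d * ∑ P ∈ Finset.univ.filter (fun P : Nat.Partition n => colen P = d),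
            g 1 ![P]
        - q ^ (d + 1) * ∑ P ∈ Finset.univ.filter
            (fun P : Nat.Partition n × Nat.Partition n =>
              colen P.1 = d - 1 ∧ colen P.2 = 1),
            g 2 ![P.1, P.2]| ≤ C * q ^ (d + 2) := by
  set G := ∑ k ∈ Icc 1 d, ∑ T ∈ Mset n d k, |g k T|
  have hG : 0 ≤ G := sum_nonneg fun _ _ => sum_nonneg fun _ _ => abs_nonneg _
  refine ⟨2 ^ (d + 1) * (G + 1), by positivity, 1 / 2, by norm_num, fun q ⟨hq0, hq⟩ => ?_⟩
  have hswap (P : Nat.Partition n × Nat.Partition n) : g 2 ![P.1, P.2] = g 2 ![P.2, P.1] := by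
    simpa using hg 2 (Equiv.swap 0 1) ![P.2, P.1]
  simp_rw [hswap, sub_sub, ← sum_mul_leadingWq hd]
  calc _ ≤ 2 ^ (d + 1) * q ^ (d + 2) * G :=
        abs_sum_mul_Wq_sub_leadingWq_le_two_pow_mul hd hq0.le hq.le _ g
    _ ≤ 2 ^ (d + 1) * (G + 1) * q ^ (d + 2) := by
        rw [mul_right_comm]
        gcongr
        linarith

/-- For `d ≥ 2`, `n ≥ 2d` and any real-valued function `g` on `𝔐^{(n)}_d`
(given as a family `g k` on `k`-tuples) invariant under permuting the entries of a tuple,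
there exist `C > 0` and `δ ∈ (0,1)` such that for all `q ∈ (0,δ)`:
`|Σ_{k=1}^d Σ_{T ∈ 𝔐^{(n)}_{d,k}} g(T)·W_q(T) - q^d Σ_{ℓ*(μ⁽¹⁾)=d} g(μ⁽¹⁾)
 - q^{d+1} Σ_{ℓ*(μ⁽¹⁾)=d-1, ℓ*(μ⁽²⁾)=1} g(μ⁽¹⁾,μ⁽²⁾)| ≤ C·q^{d+2}`. -/
theorem zero_temp_stmt11 (d n : ℕ) (hd : 2 ≤ d) (hn : 2 * d ≤ n)
    (g : ∀ k : ℕ, (Fin k → Nat.Partition n) → ℝ)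
    (hg : ∀ (k : ℕ) (σ : Equiv.Perm (Fin k)) (T : Fin k → Nat.Partition n),
      g k (T ∘ σ) = g k T) :
    ∃ C : ℝ, 0 < C ∧ ∃ δ ∈ Set.Ioo (0 : ℝ) 1, ∀ q ∈ Set.Ioo (0 : ℝ) δ,
      |(∑ k ∈ Finset.Icc 1 d, ∑ T ∈ Mset n d k, g k T * Wq q T)
        - q ^ d * ∑ P ∈ Finset.univ.filter (fun P : Nat.Partition n => colen P = d),
            g 1 ![P]
        - q ^ (d + 1) * ∑ P ∈ Finset.univ.filter
            (fun P : Nat.Partition n × Nat.Partition n =>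
              colen P.1 = d - 1 ∧ colen P.2 = 1),
            g 2 ![P.1, P.2]| ≤ C * q ^ (d + 2) :=
  zero_temp_stmt11_general d n hd g hg
end

section
/- Let d ≥ 1, n ≥ 2d, and let μ, ν be partitions of n. Then lim_{q → 0⁺} q^{−d} · H^d_q(μ, ν) = Σ_{μ^{(1)}} H(μ^{(1)}, μ, ν), where the sum runs over all partitions μ^{(1)} of n with colength ℓ*(μ^{(1)}) = d. In other words, in the zero-temperature limit the (rescaled) quantum weighted double Hurwitz number reproduces the uniformly weighted count of coverings with exactly three branch points (Belyi curves). -/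
open scoped Classical

/-- The Hurwitz number `H(μ⁽¹⁾, …, μ⁽ᵐ⁾)`: the number of `m`-tuples `(h₁, …, h_m)` of
permutations in `S_n` with `h₁h₂⋯h_m = id` and the cycle type of `hᵢ` equal to `μ⁽ⁱ⁾`
for each `i`, divided by `n!`. -/
noncomputable def Hur {n m : ℕ} (M : Fin m → Nat.Partition n) : ℚ :=
  (Nat.card {h : Fin m → Equiv.Perm (Fin n) //
      (List.ofFn h).prod = 1 ∧ ∀ i, (h i).partition.parts = (M i).parts} : ℚ)
    / (n.factorial : ℚ)

/-- The quantum weighted double Hurwitz number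
`H^d_q(μ,ν) = Σ_{k=1}^d Σ_{T ∈ 𝔐^{(n)}_{d,k}} W_q(T)·H(T, μ, ν)`. -/
noncomputable def Hdq (q : ℝ) (d : ℕ) {n : ℕ} (μ ν : Nat.Partition n) : ℝ :=
  ∑ k ∈ Finset.Icc 1 d, ∑ T ∈ Mset n d k,
    Wq q T * ((Hur (Fin.snoc (Fin.snoc T μ) ν) : ℚ) : ℝ)

open Filter Topology Finset

/-! Write `W_q(T) = q^E · ∏ⱼ (1 - q^{Tⱼ})⁻¹` with `E = T₁ + ⋯ + T_k`. Since every `Tⱼ ≥ 1` and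
`T_k = d`, we have `E ≥ d`, with equality exactly when `k = 1`. Hence `q^{-d} W_q(T)` tends to `1`
for the one-element tuples and to `0` for all others, and the one-element tuples in `𝔐^{(n)}_d`
are just the partitions of colength `d`. -/

theorem tendsto_inv_pow_mul_prod_pow_div_one_sub_pow {ι : Type*} [Fintype ι] (e : ι → ℕ)
    (he : ∀ i, e i ≠ 0) {d : ℕ} (hd : d ≤ ∑ i, e i) :
    Tendsto (fun q : ℝ => (q ^ d)⁻¹ * ∏ i, q ^ e i / (1 - q ^ e i)) (𝓝[>] 0)
      (𝓝 (if ∑ i, e i = d then 1 else 0)) := by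
  set E := ∑ i, e i
  have hcont : ContinuousAt (fun q : ℝ => q ^ (E - d) * ∏ i, (1 - q ^ e i)⁻¹) 0 := by
    fun_prop (disch := simp [he])
  have hval : (0 : ℝ) ^ (E - d) * ∏ i, (1 - (0 : ℝ) ^ e i)⁻¹ = if E = d then 1 else 0 := by
    rw [zero_pow_eq]
    have : ∀ i, (0 : ℝ) ^ e i = 0 := fun i => zero_pow (he i)
    simp only [this, sub_zero, inv_one, prod_const_one, mul_one, Nat.sub_eq_zero_iff_le]
    exact if_congr ⟨fun h => le_antisymm h hd, le_of_eq⟩ rfl rfl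
  rw [← hval]
  refine (hcont.tendsto.mono_left nhdsWithin_le_nhds).congr' ?_
  filter_upwards [self_mem_nhdsWithin] with q (hq : 0 < q)
  rw [pow_sub₀ q hq.ne' hd, prod_div_distrib, prod_pow_eq_pow_sum, div_eq_mul_inv,
    prod_inv_distrib]
  ring

def partialSum {k : ℕ} (c : Fin k → ℕ) (j : Fin k) : ℕ := ∑ i ∈ univ.filter (· ≤ j), c i

theorem le_partialSum {k : ℕ} (c : Fin k → ℕ) (j : Fin k) : c j ≤ partialSum c j :=
  single_le_sum (fun _ _ => Nat.zero_le _) (by simp)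

theorem partialSum_last {m : ℕ} (c : Fin (m + 1) → ℕ) :
    partialSum c (Fin.last m) = ∑ i, c i := by
  simp [partialSum, Fin.le_last]

theorem sum_le_sum_partialSum {m : ℕ} (c : Fin (m + 1) → ℕ) :
    ∑ i, c i ≤ ∑ j, partialSum c j :=
  partialSum_last c ▸ single_le_sum (fun _ _ => Nat.zero_le _) (mem_univ _)

theorem sum_partialSum_eq_sum_iff {m : ℕ} (c : Fin (m + 1) → ℕ) (hc : ∀ i, c i ≠ 0) :
    ∑ j, partialSum c j = ∑ i, c i ↔ m = 0 := by
  refine ⟨fun h => ?_, fun h => by subst h; simp [partialSum]⟩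
  by_contra hm
  have h0 : (0 : Fin (m + 1)) ≠ Fin.last m := by simp [Fin.ext_iff, Ne.symm hm]
  have hpair := sum_le_sum_of_subset_of_nonneg (f := partialSum c) (subset_univ {0, Fin.last m})
    (fun _ _ _ => Nat.zero_le _)
  rw [sum_pair h0, partialSum_last, h] at hpair
  have hpos := (hc 0).bot_lt.trans_le (le_partialSum c 0)
  omega

theorem Wq_eq_prod_partialSum (q : ℝ) {n k : ℕ} (T : Fin k → Nat.Partition n) :
    Wq q T = ∏ j, q ^ partialSum (fun i => colen (T i)) j /
      (1 - q ^ partialSum (fun i => colen (T i)) j) :=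
  rfl

theorem tendsto_inv_pow_mul_Wq {n d k : ℕ} {T : Fin k → Nat.Partition n} (hT : T ∈ Mset n d k)
    (hk : k ≠ 0) :
    Tendsto (fun q : ℝ => (q ^ d)⁻¹ * Wq q T) (𝓝[>] 0) (𝓝 (if k = 1 then 1 else 0)) := by
  obtain ⟨m, rfl⟩ := Nat.exists_eq_succ_of_ne_zero hk
  obtain ⟨hpos, hsum⟩ : (∀ j, 1 ≤ colen (T j)) ∧ ∑ j, colen (T j) = d := by
    simpa [Mset] using hT
  set c := fun i => colen (T i)
  have hc : ∀ i, c i ≠ 0 := fun i => Nat.one_le_iff_ne_zero.mp (hpos i)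
  have := tendsto_inv_pow_mul_prod_pow_div_one_sub_pow (partialSum c)
    (fun j => ((hc j).bot_lt.trans_le (le_partialSum c j)).ne') (hsum ▸ sum_le_sum_partialSum c)
  simpa [Wq_eq_prod_partialSum, ← hsum, sum_partialSum_eq_sum_iff c hc] using this

theorem sum_Mset_one {M : Type*} [AddCommMonoid M] {n d : ℕ} (hd : d ≠ 0)
    (f : (Fin 1 → Nat.Partition n) → M) :
    ∑ T ∈ Mset n d 1, f T = ∑ P ∈ univ.filter (fun P => colen P = d), f (fun _ => P) := by
  refine sum_equiv (Equiv.funUnique (Fin 1) _) (fun T => ?_) (fun T _ => ?_)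
  · simpa [Mset] using fun h => h ▸ Nat.one_le_iff_ne_zero.mpr hd
  · exact congrArg f (funext fun i => by rw [Subsingleton.elim i 0]; rfl)

theorem snoc_snoc_const {α : Type*} (a b c : α) :
    Fin.snoc (Fin.snoc (fun _ : Fin 1 => a) b) c = ![a, b, c] := by
  funext i; fin_cases i <;> rfl

theorem zero_temp_stmt14_general (d n : ℕ) (hd : 1 ≤ d)
    (μ ν : Nat.Partition n) :
    Filter.Tendsto (fun q : ℝ => (q ^ d)⁻¹ * Hdq q d μ ν)
      (nhdsWithin 0 (Set.Ioi 0))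
      (nhds (∑ P ∈ Finset.univ.filter (fun P : Nat.Partition n => colen P = d),
        ((Hur ![P, μ, ν] : ℚ) : ℝ))) := by
  have hlim : Tendsto (fun q : ℝ => (q ^ d)⁻¹ * Hdq q d μ ν) (𝓝[>] 0)
      (𝓝 (∑ k ∈ Icc 1 d, ∑ T ∈ Mset n d k,
        (if k = 1 then 1 else 0) * ((Hur (Fin.snoc (Fin.snoc T μ) ν) : ℚ) : ℝ))) := by
    simp only [Hdq, mul_sum, ← mul_assoc]
    refine tendsto_finsetSum _ fun k hk => tendsto_finsetSum _ fun T hT => ?_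
    exact (tendsto_inv_pow_mul_Wq hT (by grind)).mul_const _
  rw [sum_eq_single_of_mem 1 (by simp [hd]) (fun k _ hk => by simp [hk]),
    sum_Mset_one (by omega)] at hlim
  simpa [snoc_snoc_const] using hlim

/-- For `d ≥ 1`, `n ≥ 2d` and partitions `μ, ν` of `n`,
`lim_{q→0⁺} q^{-d}·H^d_q(μ,ν) = Σ_{ℓ*(μ⁽¹⁾)=d} H(μ⁽¹⁾, μ, ν)`: in the zero-temperature
limit the rescaled quantum weighted double Hurwitz number reproduces the uniformly weighted
count of coverings with exactly three branch points (Belyi curves). -/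
theorem zero_temp_stmt14 (d n : ℕ) (hd : 1 ≤ d) (hn : 2 * d ≤ n)
    (μ ν : Nat.Partition n) :
    Filter.Tendsto (fun q : ℝ => (q ^ d)⁻¹ * Hdq q d μ ν)
      (nhdsWithin 0 (Set.Ioi 0))
      (nhds (∑ P ∈ Finset.univ.filter (fun P : Nat.Partition n => colen P = d),
        ((Hur ![P, μ, ν] : ℚ) : ℝ))) :=
  zero_temp_stmt14_general d n hd μ ν
end
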